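/- arXiv:2506.07910 — 3 statements merged into one kernel-verified Lean document; each statement's English description precedes it below -/
import Mathlib

section
/- Let (Ω, ℱ, P) be a probability space, 𝒢 ⊆ ℱ a sub-σ-algebra, A and M square-integrable real random variables, and β ∈ ℝ. Suppose the additive structural model holds: E[M ∣ 𝒢 ⊔ σ(A)] = H + βA almost surely, where H is a 𝒢-measurable integrable random variable and 𝒢 ⊔ σ(A) is the σ-algebra generated by 𝒢 and σ(A). Then E[(A − E[A ∣ 𝒢]) · (M − βA)] = 0. -/
open MeasureTheory ProbabilityTheory

private lemma isFiniteMeasure_trim' {Ω : Type*} {m mΩ : MeasurableSpace Ω} (hm : m ≤ mΩ)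
    {μ : Measure Ω} [IsFiniteMeasure μ] :
    IsFiniteMeasure (μ.trim hm) :=
  ⟨by rw [trim_measurableSet_eq hm MeasurableSet.univ]; exact measure_lt_top μ _⟩

private lemma memL2_condexp {Ω : Type*} {m mΩ : MeasurableSpace Ω} (hm : m ≤ mΩ)
    {μ : Measure Ω} [IsFiniteMeasure μ] {f : Ω → ℝ}
    (hf : MemLp f 2 μ) : MemLp (μ[f|m]) 2 μ := by
  haveI : IsFiniteMeasure (μ.trim hm) := isFiniteMeasure_trim' hm
  set fL : Lp ℝ 2 μ := hf.toLp f with hfL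
  have hfeq : fL =ᵐ[μ] f := hf.coeFn_toLp
  set g : Lp ℝ 2 μ := (condExpL2 ℝ ℝ hm fL : Lp ℝ 2 μ) with hg
  have hgm : AEStronglyMeasurable[m] (g : Ω → ℝ) μ := lpMeas.aestronglyMeasurable _
  have h : (g : Ω → ℝ) =ᵐ[μ] μ[f|m] := by
    refine ae_eq_condExp_of_forall_setIntegral_eq hm (hf.integrable one_le_two)
      (fun s hs hμs => ((Lp.memLp g).integrable one_le_two).integrableOn)
      (fun s hs hμs => ?_) hgm
    rw [show ∫ x in s, (g : Ω → ℝ) x ∂μ = ∫ x in s, fL x ∂μ from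
      integral_condExpL2_eq hm fL hs hμs.ne]
    exact setIntegral_congr_ae (hm s hs) (hfeq.mono fun x hx _ => hx)
  exact (Lp.memLp g).ae_eq h

/-- Let `(Ω, ℱ, P)` be a probability space, `𝒢 ⊆ ℱ` a sub-σ-algebra, `A` and `M`
square-integrable real random variables, and `β ∈ ℝ`.  Suppose the additive structural model
holds: `E[M ∣ 𝒢 ⊔ σ(A)] = H + β A` almost surely, where `H` is a `𝒢`-measurable integrable
random variable and `𝒢 ⊔ σ(A)` is the σ-algebra generated by `𝒢` and `σ(A) = comap A`.  Then
`E[(A − E[A ∣ 𝒢]) · (M − β A)] = 0`. -/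
theorem stmt6 {Ω : Type*} (𝒢 : MeasurableSpace Ω) {mΩ : MeasurableSpace Ω}
    (μ : Measure Ω) [IsProbabilityMeasure μ]
    (h𝒢 : 𝒢 ≤ mΩ)
    (A M : Ω → ℝ) (hAmeas : Measurable A) (hMmeas : Measurable M)
    (hA2 : MemLp A 2 μ) (hM2 : MemLp M 2 μ)
    (β : ℝ) (H : Ω → ℝ)
    (hHmeas : Measurable[𝒢] H) (hHint : Integrable H μ)
    (hmodel : μ[M | 𝒢 ⊔ MeasurableSpace.comap A inferInstance]
      =ᵐ[μ] fun ω => H ω + β * A ω) :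
    ∫ ω, (A ω - (μ[A | 𝒢]) ω) * (M ω - β * A ω) ∂μ = 0 := by
  have hAint : Integrable A μ := hA2.integrable one_le_two
  have hMint : Integrable M μ := hM2.integrable one_le_two
  set m' := 𝒢 ⊔ MeasurableSpace.comap A inferInstance with hm'def
  have hm' : m' ≤ mΩ := sup_le h𝒢 hAmeas.comap_le
  haveI : SigmaFinite (μ.trim hm') := (isFiniteMeasure_trim' hm').toSigmaFinite
  haveI : SigmaFinite (μ.trim h𝒢) := (isFiniteMeasure_trim' h𝒢).toSigmaFinite
  set G : Ω → ℝ := fun ω => A ω - (μ[A|𝒢]) ω with hGdef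
  have hcond2 : MemLp (μ[A|𝒢]) 2 μ := memL2_condexp h𝒢 hA2
  have hG2 : MemLp G 2 μ := hA2.sub hcond2
  have hGint : Integrable G μ := hG2.integrable one_le_two
  have hAm'meas : Measurable[m'] A := measurable_iff_comap_le.mpr le_sup_right
  have hGm' : StronglyMeasurable[m'] G :=
    hAm'meas.stronglyMeasurable.sub (stronglyMeasurable_condExp.mono le_sup_left)
  set f : Ω → ℝ := fun ω => M ω - β * A ω with hfdef
  have hf2 : MemLp f 2 μ := hM2.sub (hA2.const_mul β)
  have hfint : Integrable f μ := hf2.integrable one_le_two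
  have hhalf : (1 : ENNReal) / 1 = 1 / 2 + 1 / 2 := by
    rw [ENNReal.div_add_div_same, one_add_one_eq_two, one_div_one]
    exact (ENNReal.div_self two_ne_zero ENNReal.ofNat_ne_top).symm
  have hGf_int : Integrable (G * f) μ := by
    have h := memLp_one_iff_integrable.mp (hf2.smul (r := 1) hG2)
    exact h.congr (Filter.Eventually.of_forall fun ω => by
      simp [Pi.smul_apply, Pi.mul_apply, smul_eq_mul])
  -- pull-out over m'
  have h1 : μ[G * f | m'] =ᵐ[μ] G * μ[f | m'] :=
    condExp_mul_of_stronglyMeasurable_left hGm' hGf_int hfint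
  have hAm' : μ[A | m'] = A :=
    condExp_of_stronglyMeasurable hm' hAm'meas.stronglyMeasurable hAint
  have h2 : μ[f | m'] =ᵐ[μ] H := by
    have hsub : μ[f|m'] =ᵐ[μ] μ[M|m'] - μ[fun ω => β * A ω|m'] := by
      have := condExp_sub (m := m') (μ := μ) hMint (hAint.const_mul β)
      exact this
    have hβ : μ[fun ω => β * A ω|m'] =ᵐ[μ] fun ω => β * A ω := by
      have hsm := condExp_smul (m := m') (μ := μ) β A
      rw [hAm'] at hsm
      refine hsm.trans ?_
      filter_upwards with ω
      simp [smul_eq_mul]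
    filter_upwards [hsub, hβ, hmodel] with ω hω1 hω2 hω3
    simp only [Pi.sub_apply] at hω1
    rw [hω1, hω2, hω3]
    ring
  have hGH_ae : μ[G * f | m'] =ᵐ[μ] fun ω => G ω * H ω := by
    refine h1.trans ?_
    filter_upwards [h2] with ω hω
    simp [hω]
  have hGH_int : Integrable (fun ω => G ω * H ω) μ :=
    integrable_condExp.congr hGH_ae
  have key : ∫ ω, G ω * f ω ∂μ = ∫ ω, G ω * H ω ∂μ := by
    rw [show ∫ ω, G ω * f ω ∂μ = ∫ ω, (G * f) ω ∂μ from rfl,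
      ← integral_condExp hm' (f := G * f)]
    exact integral_congr_ae hGH_ae
  -- pull-out over 𝒢
  have hHG_int : Integrable (H * G) μ := by
    have : (fun ω => G ω * H ω) = H * G := by funext ω; simp [mul_comm]
    rwa [this] at hGH_int
  have h3 : μ[H * G | 𝒢] =ᵐ[μ] H * μ[G | 𝒢] :=
    condExp_mul_of_stronglyMeasurable_left hHmeas.stronglyMeasurable hHG_int hGint
  have hidem : μ[μ[A|𝒢]|𝒢] = μ[A|𝒢] :=
    condExp_of_stronglyMeasurable h𝒢 stronglyMeasurable_condExp integrable_condExp
  have hG0 : μ[G|𝒢] =ᵐ[μ] 0 := by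
    have hsub : μ[A - μ[A|𝒢]|𝒢] =ᵐ[μ] μ[A|𝒢] - μ[μ[A|𝒢]|𝒢] :=
      condExp_sub hAint integrable_condExp 𝒢
    rw [hidem] at hsub
    have : G = A - μ[A|𝒢] := rfl
    rw [this]
    refine hsub.trans ?_
    filter_upwards with ω
    simp
  have hzero : μ[H * G | 𝒢] =ᵐ[μ] 0 := by
    refine h3.trans ?_
    filter_upwards [hG0] with ω hω
    simp [hω]
  have hHGint0 : ∫ ω, H ω * G ω ∂μ = 0 := by
    rw [show ∫ ω, H ω * G ω ∂μ = ∫ ω, (H * G) ω ∂μ from rfl,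
      ← integral_condExp h𝒢 (f := H * G), integral_congr_ae hzero]
    simp
  calc ∫ ω, (A ω - (μ[A | 𝒢]) ω) * (M ω - β * A ω) ∂μ
      = ∫ ω, G ω * f ω ∂μ := rfl
    _ = ∫ ω, G ω * H ω ∂μ := key
    _ = ∫ ω, H ω * G ω ∂μ := by simp_rw [mul_comm]
    _ = 0 := hHGint0
end

section
/- Let (Ω, ℱ, P) be a probability space, 𝒢 ⊆ ℱ a sub-σ-algebra, A and M square-integrable real random variables, and β ∈ ℝ. Suppose E[M ∣ 𝒢 ⊔ σ(A)] = H + βA almost surely with H a 𝒢-measurable integrable random variable, and suppose E[(A − E[A ∣ 𝒢])²] > 0. Then E[(A − E[A ∣ 𝒢]) · A] = E[(A − E[A ∣ 𝒢])²] > 0 and β = E[(A − E[A ∣ 𝒢]) · M] / E[(A − E[A ∣ 𝒢]) · A]. -/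
open MeasureTheory ProbabilityTheory

section Aux
variable {Ω : Type*} {mΩ : MeasurableSpace Ω} {μ : Measure Ω} [IsProbabilityMeasure μ]

lemma aux_mul_int {f g : Ω → ℝ} (hf : MemLp f 2 μ) (hg : MemLp g 2 μ) :
    Integrable (fun ω => f ω * g ω) μ := by
  refine (hf.integrable_sq.add hg.integrable_sq).mono' (hf.1.mul hg.1) ?_
  filter_upwards with ω
  simp only [Pi.add_apply, Real.norm_eq_abs, abs_mul]
  nlinarith [abs_nonneg (f ω), abs_nonneg (g ω), sq_abs (f ω), sq_abs (g ω),
    sq_nonneg (|f ω| - |g ω|)]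

lemma aux_condexp_L2 (𝒢 : MeasurableSpace Ω) (h𝒢 : 𝒢 ≤ mΩ) {A : Ω → ℝ}
    (hA2 : MemLp A 2 μ) : MemLp (μ[A | 𝒢]) 2 μ := by
  set f := hA2.toLp A with hf
  have key : (condExpL2 ℝ ℝ h𝒢 f : Ω → ℝ) =ᵐ[μ] μ[A | 𝒢] := by
    refine ae_eq_condExp_of_forall_setIntegral_eq h𝒢 (hA2.integrable one_le_two)
      (fun s _ hμs => integrableOn_condExpL2_of_measure_ne_top h𝒢 hμs.ne f)
      (fun s hs hμs => ?_) (aestronglyMeasurable_condExpL2 h𝒢 f)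
    rw [integral_condExpL2_eq h𝒢 f hs hμs.ne]
    exact integral_congr_ae (ae_restrict_of_ae hA2.coeFn_toLp)
  exact (Lp.memLp _).ae_eq key

end Aux

/-- Let `(Ω, ℱ, P)` be a probability space, `𝒢 ⊆ ℱ` a sub-σ-algebra, `A` and `M`
square-integrable real random variables, and `β ∈ ℝ`.  Suppose `E[M ∣ 𝒢 ⊔ σ(A)] = H + β A`
almost surely with `H` a `𝒢`-measurable integrable random variable, and suppose
`E[(A − E[A ∣ 𝒢])²] > 0`.  Then `E[(A − E[A ∣ 𝒢]) · A] = E[(A − E[A ∣ 𝒢])²] > 0` and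
`β = E[(A − E[A ∣ 𝒢]) · M] / E[(A − E[A ∣ 𝒢]) · A]`. -/
theorem stmt7 {Ω : Type*} (𝒢 : MeasurableSpace Ω) {mΩ : MeasurableSpace Ω}
    (μ : Measure Ω) [IsProbabilityMeasure μ]
    (h𝒢 : 𝒢 ≤ mΩ)
    (A M : Ω → ℝ) (hAmeas : Measurable A) (hMmeas : Measurable M)
    (hA2 : MemLp A 2 μ) (hM2 : MemLp M 2 μ)
    (β : ℝ) (H : Ω → ℝ)
    (hHmeas : Measurable[𝒢] H) (hHint : Integrable H μ)
    (hmodel : μ[M | 𝒢 ⊔ MeasurableSpace.comap A inferInstance]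
      =ᵐ[μ] fun ω => H ω + β * A ω)
    (hpos : 0 < ∫ ω, (A ω - (μ[A | 𝒢]) ω) ^ 2 ∂μ) :
    (∫ ω, (A ω - (μ[A | 𝒢]) ω) * A ω ∂μ = ∫ ω, (A ω - (μ[A | 𝒢]) ω) ^ 2 ∂μ)
      ∧ 0 < ∫ ω, (A ω - (μ[A | 𝒢]) ω) * A ω ∂μ
      ∧ β = (∫ ω, (A ω - (μ[A | 𝒢]) ω) * M ω ∂μ)
              / (∫ ω, (A ω - (μ[A | 𝒢]) ω) * A ω ∂μ) := by
  set 𝒷 := 𝒢 ⊔ MeasurableSpace.comap A inferInstance with h𝒷def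
  have h𝒷 : 𝒷 ≤ mΩ := sup_le h𝒢 (measurable_iff_comap_le.mp hAmeas)
  set Abar := μ[A | 𝒢] with hAbar
  set R := fun ω => A ω - Abar ω with hR
  have hAbar2 : MemLp Abar 2 μ := aux_condexp_L2 𝒢 h𝒢 hA2
  have hR2 : MemLp R 2 μ := hA2.sub hAbar2
  have hRint : Integrable R μ := hR2.integrable one_le_two
  have hAint : Integrable A μ := hA2.integrable one_le_two
  have hMint : Integrable M μ := hM2.integrable one_le_two
  -- μ[R | 𝒢] = 0 a.e.
  have hcondR : μ[R | 𝒢] =ᵐ[μ] 0 := by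
    have h1 : μ[R | 𝒢] =ᵐ[μ] μ[A | 𝒢] - μ[Abar | 𝒢] := condExp_sub hAint integrable_condExp 𝒢
    have h2 : μ[Abar | 𝒢] = Abar :=
      condExp_of_stronglyMeasurable h𝒢 stronglyMeasurable_condExp integrable_condExp
    filter_upwards [h1] with ω hω
    simp [hω, h2]
    exact sub_self _
  -- orthogonality: ∫ g * R = 0 for 𝒢-measurable g with g*R integrable
  have horth : ∀ g : Ω → ℝ, StronglyMeasurable[𝒢] g →
      Integrable (fun ω => g ω * R ω) μ → ∫ ω, g ω * R ω ∂μ = 0 := by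
    intro g hg hgR
    have h1 : μ[(fun ω => g ω * R ω) | 𝒢] =ᵐ[μ] fun ω => g ω * (μ[R | 𝒢]) ω := by
      have := condExp_mul_of_stronglyMeasurable_left hg hgR hRint
      filter_upwards [this] with ω hω using hω
    rw [← integral_condExp h𝒢 (μ := μ) (f := fun ω => g ω * R ω)]
    rw [integral_congr_ae (h1.trans ?_), integral_zero]
    filter_upwards [hcondR] with ω hω
    simp [hω]
  -- R is 𝒷-strongly measurable
  have hRb : StronglyMeasurable[𝒷] R := by
    have hA_b : StronglyMeasurable[𝒷] A :=
      ((measurable_iff_comap_le.mpr le_sup_right : Measurable[𝒷] A)).stronglyMeasurable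
    exact hA_b.sub (stronglyMeasurable_condExp.mono le_sup_left)
  -- first part: ∫ R*A = ∫ R²
  have hRA_int : Integrable (fun ω => R ω * A ω) μ := aux_mul_int hR2 hA2
  have hRsq_int : Integrable (fun ω => R ω ^ 2) μ := hR2.integrable_sq
  have hAbarR_int : Integrable (fun ω => Abar ω * R ω) μ := aux_mul_int hAbar2 hR2
  have hpart1 : ∫ ω, R ω * A ω ∂μ = ∫ ω, R ω ^ 2 ∂μ := by
    have hdecomp : (fun ω => R ω * A ω) = fun ω => R ω ^ 2 + Abar ω * R ω := by
      funext ω; simp only [hR]; ring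
    rw [hdecomp, integral_add hRsq_int hAbarR_int,
      horth Abar stronglyMeasurable_condExp hAbarR_int, add_zero]
  -- ∫ R*M = β * ∫ R*A
  have hRM_int : Integrable (fun ω => R ω * M ω) μ := aux_mul_int hR2 hM2
  have hpull : μ[(fun ω => R ω * M ω) | 𝒷] =ᵐ[μ] fun ω => R ω * (μ[M | 𝒷]) ω := by
    have := condExp_mul_of_stronglyMeasurable_left hRb hRM_int hMint
    filter_upwards [this] with ω hω using hω
  have hRcond_int : Integrable (fun ω => R ω * (μ[M | 𝒷]) ω) μ :=
    integrable_condExp.congr hpull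
  have hRH_int : Integrable (fun ω => H ω * R ω) μ := by
    have heq : (fun ω => R ω * (μ[M | 𝒷]) ω - β * (R ω * A ω)) =ᵐ[μ]
        fun ω => H ω * R ω := by
      filter_upwards [hmodel] with ω hω
      rw [h𝒷def] at hω ⊢
      rw [hω]; ring
    exact (hRcond_int.sub (hRA_int.const_mul β)).congr heq
  have hkey : ∫ ω, R ω * M ω ∂μ = β * ∫ ω, R ω * A ω ∂μ := by
    have h1 : ∫ ω, R ω * M ω ∂μ = ∫ ω, R ω * (μ[M | 𝒷]) ω ∂μ := by
      rw [← integral_condExp h𝒷 (μ := μ) (f := fun ω => R ω * M ω)]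
      exact integral_congr_ae hpull
    have h2 : (fun ω => R ω * (μ[M | 𝒷]) ω) =ᵐ[μ]
        fun ω => H ω * R ω + β * (R ω * A ω) := by
      filter_upwards [hmodel] with ω hω
      rw [h𝒷def] at hω ⊢
      rw [hω]; ring
    rw [h1, integral_congr_ae h2, integral_add hRH_int (hRA_int.const_mul β),
      horth H hHmeas.stronglyMeasurable hRH_int, zero_add, integral_const_mul]
  have hpos' : 0 < ∫ ω, R ω * A ω ∂μ := hpart1 ▸ hpos
  refine ⟨hpart1, hpos', ?_⟩
  rw [hkey]
  exact (mul_div_cancel_right₀ β hpos'.ne').symm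
end

section
/- Let (Ω, ℱ, P) be a probability space, 𝒢 ⊆ ℱ a sub-σ-algebra, A and M square-integrable real random variables, and β ∈ ℝ. Suppose E[M ∣ 𝒢 ⊔ σ(A)] = H + βA almost surely with H a 𝒢-measurable integrable random variable. Define μ = E[A ∣ 𝒢] and ρ = E[M ∣ 𝒢]. Then ρ = H + βμ almost surely, and consequently E[M − ρ ∣ 𝒢 ⊔ σ(A)] = β (A − μ) almost surely; equivalently, E[ M − ρ − β(A − μ) ∣ 𝒢 ⊔ σ(A) ] = 0 almost surely. -/
open MeasureTheory ProbabilityTheory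

/-- Let `(Ω, ℱ, P)` be a probability space, `𝒢 ⊆ ℱ` a sub-σ-algebra, `A` and `M`
square-integrable real random variables, and `β ∈ ℝ`.  Suppose `E[M ∣ 𝒢 ⊔ σ(A)] = H + β A`
almost surely with `H` a `𝒢`-measurable integrable random variable.  Define `μA = E[A ∣ 𝒢]` and
`ρ = E[M ∣ 𝒢]`.  Then `ρ = H + β μA` almost surely, and consequently
`E[M − ρ ∣ 𝒢 ⊔ σ(A)] = β (A − μA)` almost surely; equivalently,
`E[M − ρ − β(A − μA) ∣ 𝒢 ⊔ σ(A)] = 0` almost surely. -/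
theorem stmt8 {Ω : Type*} (𝒢 : MeasurableSpace Ω) {mΩ : MeasurableSpace Ω}
    (μ : Measure Ω) [IsProbabilityMeasure μ]
    (h𝒢 : 𝒢 ≤ mΩ)
    (A M : Ω → ℝ) (hAmeas : Measurable A) (hMmeas : Measurable M)
    (hA2 : MemLp A 2 μ) (hM2 : MemLp M 2 μ)
    (β : ℝ) (H : Ω → ℝ)
    (hHmeas : Measurable[𝒢] H) (hHint : Integrable H μ)
    (hmodel : μ[M | 𝒢 ⊔ MeasurableSpace.comap A inferInstance]
      =ᵐ[μ] fun ω => H ω + β * A ω) :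
    (μ[M | 𝒢] =ᵐ[μ] fun ω => H ω + β * (μ[A | 𝒢]) ω)
      ∧ (μ[fun ω => M ω - (μ[M | 𝒢]) ω | 𝒢 ⊔ MeasurableSpace.comap A inferInstance]
          =ᵐ[μ] fun ω => β * (A ω - (μ[A | 𝒢]) ω))
      ∧ (μ[fun ω => M ω - (μ[M | 𝒢]) ω - β * (A ω - (μ[A | 𝒢]) ω)
            | 𝒢 ⊔ MeasurableSpace.comap A inferInstance] =ᵐ[μ] 0) := by
  set 𝒢' := 𝒢 ⊔ MeasurableSpace.comap A inferInstance with h𝒢'def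
  have h𝒢' : 𝒢' ≤ mΩ := sup_le h𝒢 hAmeas.comap_le
  have hle : 𝒢 ≤ 𝒢' := le_sup_left
  have hAint : Integrable A μ := hA2.integrable one_le_two
  have hMint : Integrable M μ := hM2.integrable one_le_two
  have hA𝒢' : StronglyMeasurable[𝒢'] A :=
    by
      rw [h𝒢'def]
      have hm : Measurable[𝒢 ⊔ MeasurableSpace.comap A inferInstance] A :=
        measurable_iff_comap_le.mpr le_sup_right
      exact hm.stronglyMeasurable
  -- Part 1
  have h1 : μ[M | 𝒢] =ᵐ[μ] fun ω => H ω + β * (μ[A | 𝒢]) ω := by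
    have tower : μ[M | 𝒢] =ᵐ[μ] μ[μ[M | 𝒢'] | 𝒢] :=
      (condExp_condExp_of_le hle h𝒢').symm
    have step : μ[μ[M | 𝒢'] | 𝒢] =ᵐ[μ] μ[fun ω => H ω + β * A ω | 𝒢] :=
      condExp_congr_ae hmodel
    have hadd : μ[fun ω => H ω + β * A ω | 𝒢]
        =ᵐ[μ] μ[H | 𝒢] + μ[fun ω => β * A ω | 𝒢] :=
      condExp_add hHint (hAint.const_mul β) _
    have hH : μ[H | 𝒢] = H :=
      condExp_of_stronglyMeasurable h𝒢 hHmeas.stronglyMeasurable hHint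
    have hsmul : μ[fun ω => β * A ω | 𝒢] =ᵐ[μ] fun ω => β * (μ[A | 𝒢]) ω := by
      have := condExp_smul (μ := μ) (m := 𝒢) β A
      exact this
    refine tower.trans (step.trans (hadd.trans ?_))
    filter_upwards [hsmul] with ω hω
    simp [Pi.add_apply, hH, hω]
  -- ρ is 𝒢'-measurable, so it is its own conditional expectation
  have hρ : μ[(μ[M | 𝒢]) | 𝒢'] = μ[M | 𝒢] :=
    condExp_of_stronglyMeasurable h𝒢' (stronglyMeasurable_condExp.mono hle)
      integrable_condExp
  -- Part 2
  have h2 : μ[fun ω => M ω - (μ[M | 𝒢]) ω | 𝒢']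
      =ᵐ[μ] fun ω => β * (A ω - (μ[A | 𝒢]) ω) := by
    have hsub : μ[fun ω => M ω - (μ[M | 𝒢]) ω | 𝒢']
        =ᵐ[μ] μ[M | 𝒢'] - μ[(μ[M | 𝒢]) | 𝒢'] :=
      condExp_sub hMint integrable_condExp _
    refine hsub.trans ?_
    rw [hρ]
    filter_upwards [hmodel, h1] with ω h₁ h₂
    simp only [Pi.sub_apply, h₁, h₂]
    ring
  refine ⟨h1, h2, ?_⟩
  -- Part 3
  have hg𝒢' : StronglyMeasurable[𝒢'] (fun ω => β * (A ω - (μ[A | 𝒢]) ω)) :=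
    (stronglyMeasurable_const.mul
      (hA𝒢'.sub (stronglyMeasurable_condExp.mono hle)))
  have hgint : Integrable (fun ω => β * (A ω - (μ[A | 𝒢]) ω)) μ :=
    ((hAint.sub integrable_condExp).const_mul β)
  have hg : μ[fun ω => β * (A ω - (μ[A | 𝒢]) ω) | 𝒢']
      = fun ω => β * (A ω - (μ[A | 𝒢]) ω) :=
    condExp_of_stronglyMeasurable h𝒢' hg𝒢' hgint
  have hsub2 : μ[fun ω => M ω - (μ[M | 𝒢]) ω - β * (A ω - (μ[A | 𝒢]) ω) | 𝒢']
      =ᵐ[μ] μ[fun ω => M ω - (μ[M | 𝒢]) ω | 𝒢']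
        - μ[fun ω => β * (A ω - (μ[A | 𝒢]) ω) | 𝒢'] :=
    condExp_sub (hMint.sub integrable_condExp) hgint _
  refine hsub2.trans ?_
  rw [hg]
  filter_upwards [h2] with ω hω
  simp [Pi.sub_apply, hω]
end
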